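/- arXiv:0707.3687 — 3 statements merged into one kernel-verified Lean document; each statement's English description precedes it below -/
import Mathlib

section
/- Define H̄ : U × ℝ × (−1,1) × ℝ → ℝ by H̄((x,y), θ, w₄, r) = ⟨X(x,y), w⟩ − r = −X₁(x,y)cos θ − X₂(x,y)sin θ + X₃(x,y)√(1−w₄²) + X₄(x,y)·w₄ − r, where w = (cos θ, sin θ, √(1−w₄²), w₄). Then the map Δ*H̄ = (H̄, ∂H̄/∂x, ∂H̄/∂y) : U × ℝ × (−1,1) × ℝ → ℝ³ is a submersion at every point of its zero set {Δ*H̄ = 0}; i.e. the extended Lorentzian lightcone height function is a Morse family. -/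
noncomputable section

def pprod (x y : Fin 4 → ℝ) : ℝ :=
  -(x 0 * y 0) - x 1 * y 1 + x 2 * y 2 + x 3 * y 3

def pdx (f : ℝ × ℝ → ℝ) (p : ℝ × ℝ) : ℝ := fderiv ℝ f p (1, 0)
def pdy (f : ℝ × ℝ → ℝ) (p : ℝ × ℝ) : ℝ := fderiv ℝ f p (0, 1)

def Dx (X : ℝ × ℝ → Fin 4 → ℝ) (p : ℝ × ℝ) : Fin 4 → ℝ := fderiv ℝ X p (1, 0)
def Dy (X : ℝ × ℝ → Fin 4 → ℝ) (p : ℝ × ℝ) : Fin 4 → ℝ := fderiv ℝ X p (0, 1)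
def Dxx (X : ℝ × ℝ → Fin 4 → ℝ) (p : ℝ × ℝ) : Fin 4 → ℝ := Dx (Dx X) p
def Dxy (X : ℝ × ℝ → Fin 4 → ℝ) (p : ℝ × ℝ) : Fin 4 → ℝ := Dy (Dx X) p
def Dyy (X : ℝ × ℝ → Fin 4 → ℝ) (p : ℝ × ℝ) : Fin 4 → ℝ := Dy (Dy X) p

def detHess (f : ℝ × ℝ → ℝ) (p : ℝ × ℝ) : ℝ :=
  pdx (pdx f) p * pdy (pdy f) p - (pdy (pdx f) p) ^ 2

def IsLorentzSurface (U : Set (ℝ × ℝ)) (X : ℝ × ℝ → Fin 4 → ℝ) : Prop :=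
  IsOpen U ∧ ContDiffOn ℝ (⊤ : ℕ∞) X U ∧
    ∀ p ∈ U,
      pprod (Dx X p) (Dx X p) * pprod (Dy X p) (Dy X p) - (pprod (Dx X p) (Dy X p)) ^ 2 < 0

def IsNormalFrame (U : Set (ℝ × ℝ)) (X e1 e2 : ℝ × ℝ → Fin 4 → ℝ) : Prop :=
  ContDiffOn ℝ (⊤ : ℕ∞) e1 U ∧ ContDiffOn ℝ (⊤ : ℕ∞) e2 U ∧
    ∀ p ∈ U,
      pprod (e1 p) (e1 p) = -1 ∧ pprod (e2 p) (e2 p) = 1 ∧ pprod (e1 p) (e2 p) = 0 ∧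
      pprod (e1 p) (Dx X p) = 0 ∧ pprod (e1 p) (Dy X p) = 0 ∧
      pprod (e2 p) (Dx X p) = 0 ∧ pprod (e2 p) (Dy X p) = 0

def xi (e1 e2 : ℝ × ℝ → Fin 4 → ℝ) (σ : ℝ) (p : ℝ × ℝ) : ℝ :=
  Real.sqrt ((e1 p 0 + σ * e2 p 0) ^ 2 + (e1 p 1 + σ * e2 p 1) ^ 2)

def LG (e1 e2 : ℝ × ℝ → Fin 4 → ℝ) (σ : ℝ) (p : ℝ × ℝ) : Fin 4 → ℝ :=
  (xi e1 e2 σ p)⁻¹ • (e1 p + σ • e2 p)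

def KlVanish (X e1 e2 : ℝ × ℝ → Fin 4 → ℝ) (σ : ℝ) (p : ℝ × ℝ) : Prop :=
  pprod (Dxx X p) (e1 p + σ • e2 p) * pprod (Dyy X p) (e1 p + σ • e2 p)
    - (pprod (Dxy X p) (e1 p + σ • e2 p)) ^ 2 = 0

/-- The lightlike vector `w = (cos θ, sin θ, √(1-w₄²), w₄)`. -/
def wvec (θ w4 : ℝ) : Fin 4 → ℝ := ![Real.cos θ, Real.sin θ, Real.sqrt (1 - w4 ^ 2), w4]

/-- The extended Lorentzian lightcone height function
`H̄((x,y),θ,w₄,r) = ⟨X(x,y), w⟩ - r`. -/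
def Hbar (X : ℝ × ℝ → Fin 4 → ℝ) (q : (ℝ × ℝ) × ℝ × ℝ × ℝ) : ℝ :=
  pprod (X q.1) (wvec q.2.1 q.2.2.1) - q.2.2.2

/-- The map `Δ*H̄ = (H̄, ∂H̄/∂x, ∂H̄/∂y)`. -/
def DeltaHbar (X : ℝ × ℝ → Fin 4 → ℝ) (q : (ℝ × ℝ) × ℝ × ℝ × ℝ) : ℝ × ℝ × ℝ :=
  (Hbar X q,
   fderiv ℝ (Hbar X) q ((1, 0), 0, 0, 0),
   fderiv ℝ (Hbar X) q ((0, 1), 0, 0, 0))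

abbrev QQ := (ℝ × ℝ) × ℝ × ℝ × ℝ

lemma sqrt_hasDerivAt (w : ℝ) (h1 : -1 < w) (h2 : w < 1) :
    HasDerivAt (fun t : ℝ => Real.sqrt (1 - t ^ 2)) (-w / Real.sqrt (1 - w ^ 2)) w := by
  have hpos : 0 < 1 - w ^ 2 := by nlinarith
  have hs : Real.sqrt (1 - w ^ 2) ≠ 0 := ne_of_gt (Real.sqrt_pos.mpr hpos)
  have h := (Real.hasDerivAt_sqrt (ne_of_gt hpos)).comp w ((hasDerivAt_pow 2 w).const_sub 1)
  refine h.congr_deriv ?_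
  field_simp
  ring

lemma rowD (f : QQ → Fin 4 → ℝ) (C : Fin 4 → QQ →L[ℝ] ℝ) (τ : ℝ) (q : QQ)
    (h1 : -1 < q.2.2.1) (h2 : q.2.2.1 < 1)
    (h : ∀ i, HasFDerivAt (fun q' => f q' i) (C i) q) :
    DifferentiableAt ℝ (fun q' : QQ => pprod (f q') (wvec q'.2.1 q'.2.2.1) - τ * q'.2.2.2) q ∧
    ∀ v : QQ, fderiv ℝ (fun q' : QQ => pprod (f q') (wvec q'.2.1 q'.2.2.1) - τ * q'.2.2.2) q v =
      pprod (fun i => C i v) (wvec q.2.1 q.2.2.1)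
      + f q 0 * Real.sin q.2.1 * v.2.1 - f q 1 * Real.cos q.2.1 * v.2.1
      + f q 2 * (-q.2.2.1 / Real.sqrt (1 - q.2.2.1 ^ 2)) * v.2.2.1
      + f q 3 * v.2.2.1 - τ * v.2.2.2 := by
  have hfun : (fun q' : QQ => pprod (f q') (wvec q'.2.1 q'.2.2.1) - τ * q'.2.2.2)
      = fun q' : QQ => -(f q' 0 * Real.cos q'.2.1) - f q' 1 * Real.sin q'.2.1
        + f q' 2 * Real.sqrt (1 - q'.2.2.1 ^ 2) + f q' 3 * q'.2.2.1 - τ * q'.2.2.2 := by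
    funext q'
    simp [pprod, wvec]
  have hθ : HasFDerivAt (fun q' : QQ => q'.2.1)
      ((ContinuousLinearMap.fst ℝ ℝ (ℝ × ℝ)).comp
        (ContinuousLinearMap.snd ℝ (ℝ × ℝ) (ℝ × ℝ × ℝ))) q :=
    hasFDerivAt_fst.comp q hasFDerivAt_snd
  have hw4 : HasFDerivAt (fun q' : QQ => q'.2.2.1)
      ((ContinuousLinearMap.fst ℝ ℝ ℝ).comp
        ((ContinuousLinearMap.snd ℝ ℝ (ℝ × ℝ)).comp
          (ContinuousLinearMap.snd ℝ (ℝ × ℝ) (ℝ × ℝ × ℝ)))) q :=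
    hasFDerivAt_fst.comp q (hasFDerivAt_snd.comp q hasFDerivAt_snd)
  have hrr : HasFDerivAt (fun q' : QQ => q'.2.2.2)
      ((ContinuousLinearMap.snd ℝ ℝ ℝ).comp
        ((ContinuousLinearMap.snd ℝ ℝ (ℝ × ℝ)).comp
          (ContinuousLinearMap.snd ℝ (ℝ × ℝ) (ℝ × ℝ × ℝ)))) q :=
    hasFDerivAt_snd.comp q (hasFDerivAt_snd.comp q hasFDerivAt_snd)
  have hcos : HasFDerivAt (fun q' : QQ => Real.cos q'.2.1) _ q :=
    HasFDerivAt.comp (g := Real.cos) q (Real.hasDerivAt_cos q.2.1).hasFDerivAt hθ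
  have hsin : HasFDerivAt (fun q' : QQ => Real.sin q'.2.1) _ q :=
    HasFDerivAt.comp (g := Real.sin) q (Real.hasDerivAt_sin q.2.1).hasFDerivAt hθ
  have hsq : HasFDerivAt (fun q' : QQ => Real.sqrt (1 - q'.2.2.1 ^ 2)) _ q :=
    HasFDerivAt.comp (g := fun t : ℝ => Real.sqrt (1 - t ^ 2)) q (sqrt_hasDerivAt q.2.2.1 h1 h2).hasFDerivAt hw4
  have HT := ((((((h 0).mul hcos).neg.sub ((h 1).mul hsin)).add ((h 2).mul hsq)).add
      ((h 3).mul hw4)).sub (hrr.const_mul τ))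
  rw [hfun]
  refine ⟨HT.differentiableAt, fun v => ?_⟩
  rw [(show HasFDerivAt (fun q' : QQ => -(f q' 0 * Real.cos q'.2.1) - f q' 1 * Real.sin q'.2.1
      + f q' 2 * Real.sqrt (1 - q'.2.2.1 ^ 2) + f q' 3 * q'.2.2.1 - τ * q'.2.2.2) _ q from HT).fderiv]
  simp [pprod, wvec, ContinuousLinearMap.smul_apply, ContinuousLinearMap.comp_apply,
    ContinuousLinearMap.smulRight_apply, ContinuousLinearMap.one_apply, smul_eq_mul]
  ring

lemma keyalg (a0 a1 a2 a3 b0 b1 b2 b3 c s u w4 : ℝ) (hu : 0 < u)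
    (ha : -(a0*c) - a1*s + a2*u + a3*w4 = 0)
    (hb : -(b0*c) - b1*s + b2*u + b3*w4 = 0)
    (hcs : c^2 + s^2 = 1) (huw : u^2 + w4^2 = 1)
    (hg : (-(a0*a0) - a1*a1 + a2*a2 + a3*a3) * (-(b0*b0) - b1*b1 + b2*b2 + b3*b3)
        - (-(a0*b0) - a1*b1 + a2*b2 + a3*b3)^2 < 0) :
    (a0*s - a1*c) * (b2*(-w4/u) + b3) - (a2*(-w4/u) + a3) * (b0*s - b1*c) ≠ 0 := by
  have hD : ((a0*s - a1*c) * (-(w4*b2) + u*b3) - (-(w4*a2) + u*a3) * (b0*s - b1*c))^2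
      = -((-(a0*a0) - a1*a1 + a2*a2 + a3*a3) * (-(b0*b0) - b1*b1 + b2*b2 + b3*b3)
        - (-(a0*b0) - a1*b1 + a2*b2 + a3*b3)^2) := by
    linear_combination ((-1)*a3*b3^2*w4 + (1)*a3*b3^2*w4^3 + (-2)*a3*b2*b3*u + (2)*a3*b2*b3*u*w4^2 + (1)*a3*b2^2*w4^3 + (2)*a3*b2^2*u^2*w4 + (2)*a3*b1*b3*s + (-2)*a3*b1*b3*s*w4^2 + (-2)*a3*b1*b3*s*u^2 + (-1)*a3*b1^2*w4 + (-1)*a3*b0*b3*c*w4^2 + (-1)*a3*b0*b2*c*u*w4 + (1)*a3*b0*b1*c*s*w4 + (-1)*a3*b0^2*w4 + (1)*a3*b0^2*c^2*w4 + (1)*a2*b3^2*u + (1)*a2*b3^2*u*w4^2 + (-2)*a2*b2*b3*w4^3 + (-1)*a2*b2^2*u*w4^2 + (-1)*a2*b1^2*u + (-1)*a2*b0*b3*c*u*w4 + (-1)*a2*b0*b2*c*u^2 + (1)*a2*b0*b1*c*s*u + (-1)*a2*b0^2*u + (1)*a2*b0^2*c^2*u + (-1)*a1*b3^2*s + (1)*a1*b3^2*s*w4^2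 + (2)*a1*b3^2*s*u^2 + (-2)*a1*b2*b3*s*u*w4 + (1)*a1*b2^2*s*w4^2 + (1)*a1*b1*b3*w4 + (1)*a1*b1*b2*u + (-1)*a1*b0*b3*c*s*w4 + (-1)*a1*b0*b2*c*s*u + (1)*a1*b0*b1*c + (1)*a1*b0*b1*c*s^2 + (-1)*a1*b0^2*s + (1)*a1*b0^2*c^2*s + (1)*a0*b3^2*c + (1)*a0*b2^2*c*w4^2 + (1)*a0*b2^2*c*u^2 + (-1)*a0*b1^2*c + (-1)*a0*b1^2*c*s^2 + (1)*a0*b0*b3*w4 + (-1)*a0*b0*b3*c^2*w4 + (1)*a0*b0*b2*u + (-1)*a0*b0*b2*c^2*u + (1)*a0*b0*b1*s + (-1)*a0*b0*b1*c^2*s) * ha + ((1)*a3^2*b3*w4 + (-1)*a3^2*b3*w4^3 + (1)*a3^2*b2*u + (-1)*a3^2*b2*u*w4^2 + (-1)*a3^2*b1*s + (1)*a3^2*b1*s*w4^2 + (2)*a3^2*b1*s*u^2 + (1)*a3^2*b0*c + (-2)*a2*a3*b3*u*w4^2 + (-2)*a2*a3*b2*u^2*w4 + (-2)*a2*a3*b1*s*u*w4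 + (1)*a2^2*b3*w4^3 + (1)*a2^2*b2*u*w4^2 + (1)*a2^2*b1*s*w4^2 + (1)*a2^2*b0*c*w4^2 + (1)*a2^2*b0*c*u^2 + (-2)*a1*a3*b3*s*u^2 + (2)*a1*a3*b2*s*u*w4 + (1)*a1*a3*b1*w4 + (2)*a1*a2*b3*s*u*w4 + (-2)*a1*a2*b2*s*w4^2 + (1)*a1*a2*b1*u + (-1)*a1^2*b3*w4 + (-1)*a1^2*b2*u + (-1)*a1^2*b0*c + (-1)*a1^2*b0*c*s^2 + (-2)*a0*a3*b3*c + (1)*a0*a3*b3*c*w4^2 + (1)*a0*a3*b2*c*u*w4 + (-1)*a0*a3*b1*c*s*w4 + (1)*a0*a3*b0*s^2*w4 + (1)*a0*a2*b3*c*u*w4 + (-2)*a0*a2*b2*c*w4^2 + (-1)*a0*a2*b2*c*u^2 + (-1)*a0*a2*b1*c*s*u + (1)*a0*a2*b0*s^2*u + (1)*a0*a1*b3*c*s*w4 + (1)*a0*a1*b2*c*s*u + (1)*a0*a1*b1*c + (1)*a0*a1*b1*c*s^2 + (1)*a0*a1*b0*s^3 + (-1)*a0^2*b3*s^2*w4 +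 (-1)*a0^2*b2*s^2*u + (-1)*a0^2*b1*s^3) * hb + ((1)*a3^2*b1^2*u^2 + (1)*a3^2*b0^2 + (-1)*a3^2*b0^2*w4^2 + (-2)*a2*a3*b1^2*u*w4 + (-2)*a2*a3*b0^2*u*w4 + (1)*a2^2*b1^2*w4^2 + (1)*a2^2*b0^2*w4^2 + (-2)*a1*a3*b1*b3*u^2 + (2)*a1*a3*b1*b2*u*w4 + (2)*a1*a2*b1*b3*u*w4 + (-2)*a1*a2*b1*b2*w4^2 + (1)*a1^2*b3^2*u^2 + (-2)*a1^2*b2*b3*u*w4 + (1)*a1^2*b2^2*w4^2 + (-1)*a1^2*b0^2 + (-2)*a0*a3*b0*b3 + (1)*a0*a3*b0*b3*w4^2 + (1)*a0*a3*b0*b2*u*w4 + (1)*a0*a3*b0*b1*s*w4 + (1)*a0*a3*b0^2*c*w4 + (1)*a0*a2*b0*b3*u*w4 + (-2)*a0*a2*b0*b2*w4^2 + (-1)*a0*a2*b0*b2*u^2 + (1)*a0*a2*b0*b1*s*u + (1)*a0*a2*b0^2*c*u + (-1)*a0*a1*b0*b3*s*w4 + (-1)*a0*a1*b0*b2*s*u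 + (2)*a0*a1*b0*b1 + (1)*a0*a1*b0*b1*s^2 + (1)*a0*a1*b0^2*c*s + (1)*a0^2*b3^2 + (1)*a0^2*b2^2*w4^2 + (1)*a0^2*b2^2*u^2 + (-1)*a0^2*b1^2 + (-1)*a0^2*b1^2*s^2 + (-1)*a0^2*b0*b3*c*w4 + (-1)*a0^2*b0*b2*c*u + (-1)*a0^2*b0*b1*c*s) * hcs + ((-1)*a3^2*b2^2 + (-1)*a3^2*b2^2*w4^2 + (-2)*a3^2*b1*b2*s*u + (1)*a3^2*b1^2 + (1)*a3^2*b1^2*s^2 + (1)*a3^2*b0^2*s^2 + (2)*a2*a3*b2*b3 + (2)*a2*a3*b2*b3*w4^2 + (2)*a2*a3*b1*b3*s*u + (-1)*a2^2*b3^2 + (-1)*a2^2*b3^2*w4^2 + (1)*a2^2*b1^2 + (1)*a2^2*b0^2 + (2)*a1*a3*b2*b3*s*u + (-2)*a1*a3*b1*b3 + (-2)*a1*a3*b1*b3*s^2 + (-2)*a1*a2*b3^2*s*u + (-2)*a1*a2*b1*b2 + (1)*a1^2*b3^2 + (1)*a1^2*b3^2*s^2 + (1)*a1^2*b2^2 +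 (-2)*a0*a3*b0*b3*s^2 + (-2)*a0*a2*b0*b2 + (1)*a0^2*b3^2*s^2 + (1)*a0^2*b2^2) * huw
  intro h0
  have hu' : u ≠ 0 := ne_of_gt hu
  have hud : u * ((a0*s - a1*c) * (b2*(-w4/u) + b3) - (a2*(-w4/u) + a3) * (b0*s - b1*c))
      = (a0*s - a1*c) * (-(w4*b2) + u*b3) - (-(w4*a2) + u*a3) * (b0*s - b1*c) := by
    field_simp
  rw [h0, mul_zero] at hud
  rw [← hud] at hD
  nlinarith [hD, hg]

lemma solve2 (P1 P2 Q1 Q2 y2 y3 : ℝ) (h : P1 * Q2 - P2 * Q1 ≠ 0) :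
    ∃ t s : ℝ, P1 * t + P2 * s = y2 ∧ Q1 * t + Q2 * s = y3 :=
  ⟨(y2 * Q2 - y3 * P2) / (P1 * Q2 - P2 * Q1), (P1 * y3 - Q1 * y2) / (P1 * Q2 - P2 * Q1),
    by field_simp; ring, by rw [mul_div_assoc', mul_div_assoc', ← add_div, div_eq_iff h]; ring⟩

theorem stmt12 (U : Set (ℝ × ℝ)) (X : ℝ × ℝ → Fin 4 → ℝ)
    (hsurf : IsLorentzSurface U X) :
    ∀ q : (ℝ × ℝ) × ℝ × ℝ × ℝ, q.1 ∈ U → q.2.2.1 ∈ Set.Ioo (-1 : ℝ) 1 →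
      DeltaHbar X q = 0 → Function.Surjective (fderiv ℝ (DeltaHbar X) q) := by
  obtain ⟨hU, hX, hG⟩ := hsurf
  -- basic differentiability facts
  have hXc : ∀ p ∈ U, ContDiffAt ℝ (⊤ : ℕ∞) X p := fun p hp => hX.contDiffAt (hU.mem_nhds hp)
  have hXd : ∀ p ∈ U, DifferentiableAt ℝ X p := fun p hp =>
    (hXc p hp).differentiableAt (by simp)
  have hXdi : ∀ p ∈ U, ∀ i, DifferentiableAt ℝ (fun z => X z i) p := fun p hp i =>
    differentiableAt_pi.1 (hXd p hp) i
  have hDXd : ∀ p ∈ U, ∀ i, DifferentiableAt ℝ (fun z => Dx X z i) p := by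
    intro p hp i
    have h1 : ContDiffAt ℝ (⊤ : ℕ∞) (fderiv ℝ X) p := (hXc p hp).fderiv_right (by simp)
    have h2 : DifferentiableAt ℝ (fun z => fderiv ℝ X z ((1 : ℝ), (0 : ℝ))) p :=
      (h1.differentiableAt (by simp)).clm_apply (differentiableAt_const _)
    exact differentiableAt_pi.1 h2 i
  have hDYd : ∀ p ∈ U, ∀ i, DifferentiableAt ℝ (fun z => Dy X z i) p := by
    intro p hp i
    have h1 : ContDiffAt ℝ (⊤ : ℕ∞) (fderiv ℝ X) p := (hXc p hp).fderiv_right (by simp)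
    have h2 : DifferentiableAt ℝ (fun z => fderiv ℝ X z ((0 : ℝ), (1 : ℝ))) p :=
      (h1.differentiableAt (by simp)).clm_apply (differentiableAt_const _)
    exact differentiableAt_pi.1 h2 i
  -- fderiv of component functions
  have hcomp : ∀ p ∈ U, ∀ i, fderiv ℝ (fun z => X z i) p =
      (ContinuousLinearMap.proj i).comp (fderiv ℝ X p) := by
    intro p hp i
    exact (hasFDerivAt_pi'.1 (hXd p hp).hasFDerivAt i).fderiv
  -- the three row functions
  -- master derivative formula for Hbar on the good region
  have master : ∀ q' : QQ, q'.1 ∈ U → -1 < q'.2.2.1 → q'.2.2.1 < 1 →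
      DifferentiableAt ℝ (Hbar X) q' ∧
      ∀ v : QQ, fderiv ℝ (Hbar X) q' v =
        pprod (fun i => fderiv ℝ (fun z => X z i) q'.1 v.1) (wvec q'.2.1 q'.2.2.1)
        + X q'.1 0 * Real.sin q'.2.1 * v.2.1 - X q'.1 1 * Real.cos q'.2.1 * v.2.1
        + X q'.1 2 * (-q'.2.2.1 / Real.sqrt (1 - q'.2.2.1 ^ 2)) * v.2.2.1
        + X q'.1 3 * v.2.2.1 - v.2.2.2 := by
    intro q' hq1 hw1 hw2
    have hC : ∀ i, HasFDerivAt (fun z : QQ => X z.1 i)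
        ((fderiv ℝ (fun p => X p i) q'.1).comp
          (ContinuousLinearMap.fst ℝ (ℝ × ℝ) (ℝ × ℝ × ℝ))) q' := fun i =>
      ((hXdi q'.1 hq1 i).hasFDerivAt).comp q' hasFDerivAt_fst
    obtain ⟨hd, he⟩ := rowD (fun z : QQ => X z.1)
      (fun i => (fderiv ℝ (fun p => X p i) q'.1).comp
        (ContinuousLinearMap.fst ℝ (ℝ × ℝ) (ℝ × ℝ × ℝ))) 1 q' hw1 hw2 hC
    have hHeq : Hbar X = fun z : QQ =>
        pprod ((fun z : QQ => X z.1) z) (wvec z.2.1 z.2.2.1) - 1 * z.2.2.2 := by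
      funext z
      simp [Hbar]
    rw [hHeq]
    refine ⟨hd, fun v => ?_⟩
    rw [he v]
    simp [ContinuousLinearMap.comp_apply]
  -- the partial-derivative identification
  have key1 : ∀ q' : QQ, q'.1 ∈ U → -1 < q'.2.2.1 → q'.2.2.1 < 1 →
      fderiv ℝ (Hbar X) q' ((1, 0), 0, 0, 0) = pprod (Dx X q'.1) (wvec q'.2.1 q'.2.2.1) := by
    intro q' hq1 hw1 hw2
    rw [(master q' hq1 hw1 hw2).2 (((1 : ℝ), (0 : ℝ)), (0 : ℝ), (0 : ℝ), (0 : ℝ))]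
    simp [pprod, hcomp q'.1 hq1, Dx]
  have key2 : ∀ q' : QQ, q'.1 ∈ U → -1 < q'.2.2.1 → q'.2.2.1 < 1 →
      fderiv ℝ (Hbar X) q' ((0, 1), 0, 0, 0) = pprod (Dy X q'.1) (wvec q'.2.1 q'.2.2.1) := by
    intro q' hq1 hw1 hw2
    rw [(master q' hq1 hw1 hw2).2 (((0 : ℝ), (1 : ℝ)), (0 : ℝ), (0 : ℝ), (0 : ℝ))]
    simp [pprod, hcomp q'.1 hq1, Dy]
  intro q hqU hqW hq0
  obtain ⟨hw1, hw2⟩ := hqW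
  -- the nice local representative of DeltaHbar
  set FF : QQ → ℝ × ℝ × ℝ := fun z =>
    (Hbar X z,
     pprod (Dx X z.1) (wvec z.2.1 z.2.2.1),
     pprod (Dy X z.1) (wvec z.2.1 z.2.2.1)) with hFFdef
  have hEq : DeltaHbar X =ᶠ[nhds q] FF := by
    have hVopen : IsOpen (U ×ˢ ((Set.univ : Set ℝ) ×ˢ (Set.Ioo (-1 : ℝ) 1 ×ˢ (Set.univ : Set ℝ)))) :=
      hU.prod (isOpen_univ.prod ((isOpen_Ioo).prod isOpen_univ))
    have hqV : q ∈ U ×ˢ ((Set.univ : Set ℝ) ×ˢ (Set.Ioo (-1 : ℝ) 1 ×ˢ (Set.univ : Set ℝ))) :=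
      ⟨hqU, trivial, ⟨hw1, hw2⟩, trivial⟩
    filter_upwards [hVopen.mem_nhds hqV] with z hz
    obtain ⟨hz1, -, ⟨hz2, hz3⟩, -⟩ := hz
    simp only [DeltaHbar, hFFdef]
    rw [key1 z hz1 hz2 hz3, key2 z hz1 hz2 hz3]
  have hfeq : fderiv ℝ (DeltaHbar X) q = fderiv ℝ FF q := hEq.fderiv_eq
  -- derivatives of the three rows of FF
  obtain ⟨hd0, he0⟩ := master q hqU hw1 hw2
  have hC1 : ∀ i, HasFDerivAt (fun z : QQ => Dx X z.1 i)
      ((fderiv ℝ (fun p => Dx X p i) q.1).comp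
        (ContinuousLinearMap.fst ℝ (ℝ × ℝ) (ℝ × ℝ × ℝ))) q := fun i =>
    ((hDXd q.1 hqU i).hasFDerivAt).comp q hasFDerivAt_fst
  have hC2 : ∀ i, HasFDerivAt (fun z : QQ => Dy X z.1 i)
      ((fderiv ℝ (fun p => Dy X p i) q.1).comp
        (ContinuousLinearMap.fst ℝ (ℝ × ℝ) (ℝ × ℝ × ℝ))) q := fun i =>
    ((hDYd q.1 hqU i).hasFDerivAt).comp q hasFDerivAt_fst
  have hrow1 := rowD (fun z : QQ => Dx X z.1)
    (fun i => (fderiv ℝ (fun p => Dx X p i) q.1).comp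
      (ContinuousLinearMap.fst ℝ (ℝ × ℝ) (ℝ × ℝ × ℝ))) 0 q hw1 hw2 hC1
  have hrow2 := rowD (fun z : QQ => Dy X z.1)
    (fun i => (fderiv ℝ (fun p => Dy X p i) q.1).comp
      (ContinuousLinearMap.fst ℝ (ℝ × ℝ) (ℝ × ℝ × ℝ))) 0 q hw1 hw2 hC2
  have hr1eq : (fun q' : QQ => pprod ((fun z : QQ => Dx X z.1) q') (wvec q'.2.1 q'.2.2.1)
      - (0 : ℝ) * q'.2.2.2) = fun z : QQ => pprod (Dx X z.1) (wvec z.2.1 z.2.2.1) := by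
    funext z; ring
  have hr2eq : (fun q' : QQ => pprod ((fun z : QQ => Dy X z.1) q') (wvec q'.2.1 q'.2.2.1)
      - (0 : ℝ) * q'.2.2.2) = fun z : QQ => pprod (Dy X z.1) (wvec z.2.1 z.2.2.1) := by
    funext z; ring
  rw [hr1eq] at hrow1
  rw [hr2eq] at hrow2
  obtain ⟨hd1, he1⟩ := hrow1
  obtain ⟨hd2, he2⟩ := hrow2
  have hFF : HasFDerivAt FF
      ((fderiv ℝ (Hbar X) q).prod
        ((fderiv ℝ (fun z : QQ => pprod (Dx X z.1) (wvec z.2.1 z.2.2.1)) q).prod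
         (fderiv ℝ (fun z : QQ => pprod (Dy X z.1) (wvec z.2.1 z.2.2.1)) q))) q :=
    HasFDerivAt.prodMk hd0.hasFDerivAt (HasFDerivAt.prodMk hd1.hasFDerivAt hd2.hasFDerivAt)
  -- the zero-set conditions
  have hax : pprod (Dx X q.1) (wvec q.2.1 q.2.2.1) = 0 := by
    have h2 : (DeltaHbar X q).2.1 = 0 := by rw [hq0]; rfl
    rw [← key1 q hqU hw1 hw2]
    simpa [DeltaHbar] using h2
  have hay : pprod (Dy X q.1) (wvec q.2.1 q.2.2.1) = 0 := by
    have h2 : (DeltaHbar X q).2.2 = 0 := by rw [hq0]; rfl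
    rw [← key2 q hqU hw1 hw2]
    simpa [DeltaHbar] using h2
  -- notation
  set cθ := Real.cos q.2.1 with hcθ
  set sθ := Real.sin q.2.1 with hsθ
  set u := Real.sqrt (1 - q.2.2.1 ^ 2) with hu
  have hupos : 0 < u := Real.sqrt_pos.mpr (by nlinarith)
  have huw : u ^ 2 + q.2.2.1 ^ 2 = 1 := by
    rw [hu, Real.sq_sqrt (by nlinarith : (0:ℝ) ≤ 1 - q.2.2.1 ^ 2)]; ring
  have hcs : cθ ^ 2 + sθ ^ 2 = 1 := Real.cos_sq_add_sin_sq q.2.1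
  have hax' : -(Dx X q.1 0 * cθ) - Dx X q.1 1 * sθ + Dx X q.1 2 * u + Dx X q.1 3 * q.2.2.1 = 0 := by
    have := hax
    simp [pprod, wvec, ← hcθ, ← hsθ, ← hu] at this
    linarith [this]
  have hay' : -(Dy X q.1 0 * cθ) - Dy X q.1 1 * sθ + Dy X q.1 2 * u + Dy X q.1 3 * q.2.2.1 = 0 := by
    have := hay
    simp [pprod, wvec, ← hcθ, ← hsθ, ← hu] at this
    linarith [this]
  have hg' := hG q.1 hqU
  have hg'' : (-(Dx X q.1 0 * Dx X q.1 0) - Dx X q.1 1 * Dx X q.1 1 + Dx X q.1 2 * Dx X q.1 2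
        + Dx X q.1 3 * Dx X q.1 3) *
      (-(Dy X q.1 0 * Dy X q.1 0) - Dy X q.1 1 * Dy X q.1 1 + Dy X q.1 2 * Dy X q.1 2
        + Dy X q.1 3 * Dy X q.1 3) -
      (-(Dx X q.1 0 * Dy X q.1 0) - Dx X q.1 1 * Dy X q.1 1 + Dx X q.1 2 * Dy X q.1 2
        + Dx X q.1 3 * Dy X q.1 3) ^ 2 < 0 := by
    simpa [pprod] using hg'
  have hdet := keyalg (Dx X q.1 0) (Dx X q.1 1) (Dx X q.1 2) (Dx X q.1 3)
    (Dy X q.1 0) (Dy X q.1 1) (Dy X q.1 2) (Dy X q.1 3) cθ sθ u q.2.2.1 hupos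
    hax' hay' hcs huw hg''
  -- surjectivity
  rintro ⟨y1, y2, y3⟩
  obtain ⟨t, s, hts2, hts3⟩ := solve2
    (Dx X q.1 0 * sθ - Dx X q.1 1 * cθ) (Dx X q.1 2 * (-q.2.2.1 / u) + Dx X q.1 3)
    (Dy X q.1 0 * sθ - Dy X q.1 1 * cθ) (Dy X q.1 2 * (-q.2.2.1 / u) + Dy X q.1 3)
    y2 y3 hdet
  refine ⟨(((0 : ℝ), (0 : ℝ)), t, s,
    (X q.1 0 * sθ - X q.1 1 * cθ) * t
      + (X q.1 2 * (-q.2.2.1 / u) + X q.1 3) * s - y1), ?_⟩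
  rw [hfeq, hFF.fderiv]
  have e0 := he0 (((0 : ℝ), (0 : ℝ)), t, s,
    (X q.1 0 * sθ - X q.1 1 * cθ) * t + (X q.1 2 * (-q.2.2.1 / u) + X q.1 3) * s - y1)
  have e1 := he1 (((0 : ℝ), (0 : ℝ)), t, s,
    (X q.1 0 * sθ - X q.1 1 * cθ) * t + (X q.1 2 * (-q.2.2.1 / u) + X q.1 3) * s - y1)
  have e2 := he2 (((0 : ℝ), (0 : ℝ)), t, s,
    (X q.1 0 * sθ - X q.1 1 * cθ) * t + (X q.1 2 * (-q.2.2.1 / u) + X q.1 3) * s - y1)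
  simp only [ContinuousLinearMap.comp_apply, ContinuousLinearMap.coe_fst',
    Prod.mk_zero_zero, ContinuousLinearMap.map_zero, pprod,
    ContinuousLinearMap.prod_apply] at e0 e1 e2 ⊢
  rw [e0, e1, e2]
  refine Prod.ext ?_ (Prod.ext ?_ ?_)
  · show _ = y1
    ring
  · show _ = y2
    linear_combination hts2
  · show _ = y3
    linear_combination hts3
end
end

section
/- Let p ∈ U, θ ∈ ℝ, w₄ ∈ (−1,1), w₃ = √(1−w₄²), and set w = (cos θ, sin θ, w₃, w₄) (a lightlike vector). If ⟨X_x(p), w⟩ = ⟨X_y(p), w⟩ = 0 (i.e. w lies in the normal plane of M at p), then the 2×2 matrix A with rows ( ∂X₁/∂x·sin θ − ∂X₂/∂x·cos θ , −∂X₃/∂x·(w₄/w₃) + ∂X₄/∂x ) and ( ∂X₁/∂y·sin θ − ∂X₂/∂y·cos θ , −∂X₃/∂y·(w₄/w₃) + ∂X₄/∂y ), all partial derivatives evaluated at p, is invertible: det A ≠ 0. -/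
noncomputable section

theorem stmt13 (U : Set (ℝ × ℝ)) (X : ℝ × ℝ → Fin 4 → ℝ)
    (hsurf : IsLorentzSurface U X)
    (p : ℝ × ℝ) (hp : p ∈ U)
    (θ w₃ w₄ : ℝ) (hw₄ : w₄ ∈ Set.Ioo (-1 : ℝ) 1) (hw₃ : w₃ = Real.sqrt (1 - w₄ ^ 2))
    (w : Fin 4 → ℝ) (hw : w = ![Real.cos θ, Real.sin θ, w₃, w₄])
    (hnx : pprod (Dx X p) w = 0) (hny : pprod (Dy X p) w = 0) :
    (Matrix.det !![Dx X p 0 * Real.sin θ - Dx X p 1 * Real.cos θ,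
                   -(Dx X p 2) * (w₄ / w₃) + Dx X p 3;
                   Dy X p 0 * Real.sin θ - Dy X p 1 * Real.cos θ,
                   -(Dy X p 2) * (w₄ / w₃) + Dy X p 3]) ≠ 0 := by
  intro hdet
  obtain ⟨hm1, hm2⟩ := hw₄
  have hpos : (0:ℝ) < 1 - w₄ ^ 2 := by nlinarith
  have hw3pos : 0 < w₃ := by rw [hw₃]; exact Real.sqrt_pos.mpr hpos
  have hw3ne : w₃ ≠ 0 := hw3pos.ne'
  have hw3sq : w₃ ^ 2 + w₄ ^ 2 = 1 := by
    rw [hw₃, Real.sq_sqrt hpos.le]; ring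
  have hsc : Real.sin θ ^ 2 + Real.cos θ ^ 2 = 1 := Real.sin_sq_add_cos_sq θ
  have hgram := hsurf.2.2 p hp
  subst hw
  simp only [pprod, Matrix.cons_val_zero, Matrix.cons_val_one, Matrix.head_cons,
    Matrix.cons_val_two, Matrix.tail_cons, Matrix.cons_val_three] at hnx hny hgram
  rw [Matrix.det_fin_two_of] at hdet
  set s := Real.sin θ with hs
  set c := Real.cos θ with hc
  set u0 := Dx X p 0; set u1 := Dx X p 1; set u2 := Dx X p 2; set u3 := Dx X p 3
  set v0 := Dy X p 0; set v1 := Dy X p 1; set v2 := Dy X p 2; set v3 := Dy X p 3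
  have hG : (u0 * s - u1 * c) * (-v2 * w₄ + v3 * w₃)
      - (v0 * s - v1 * c) * (-u2 * w₄ + u3 * w₃) = 0 := by
    field_simp at hdet
    linear_combination hdet
  have h1 : -(u0 * u0) - u1 * u1 + u2 * u2 + u3 * u3
      = -(u0 * s - u1 * c) ^ 2 + (-u2 * w₄ + u3 * w₃) ^ 2 := by
    linear_combination (u2 * w₃ + u3 * w₄ + u0 * c + u1 * s) * hnx
      + (u0 ^ 2 + u1 ^ 2) * hsc - (u2 ^ 2 + u3 ^ 2) * hw3sq
  have h2 : -(u0 * v0) - u1 * v1 + u2 * v2 + u3 * v3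
      = -((u0 * s - u1 * c) * (v0 * s - v1 * c))
        + (-u2 * w₄ + u3 * w₃) * (-v2 * w₄ + v3 * w₃) := by
    linear_combination (v2 * w₃ + v3 * w₄) * hnx + (u0 * c + u1 * s) * hny
      + (u0 * v0 + u1 * v1) * hsc - (u2 * v2 + u3 * v3) * hw3sq
  have h3 : -(v0 * v0) - v1 * v1 + v2 * v2 + v3 * v3
      = -(v0 * s - v1 * c) ^ 2 + (-v2 * w₄ + v3 * w₃) ^ 2 := by
    linear_combination (v2 * w₃ + v3 * w₄ + v0 * c + v1 * s) * hny
      + (v0 ^ 2 + v1 ^ 2) * hsc - (v2 ^ 2 + v3 ^ 2) * hw3sq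
  rw [h1, h2, h3] at hgram
  have hzero : (-(u0 * s - u1 * c) ^ 2 + (-u2 * w₄ + u3 * w₃) ^ 2)
      * (-(v0 * s - v1 * c) ^ 2 + (-v2 * w₄ + v3 * w₃) ^ 2)
      - (-((u0 * s - u1 * c) * (v0 * s - v1 * c))
        + (-u2 * w₄ + u3 * w₃) * (-v2 * w₄ + v3 * w₃)) ^ 2 = 0 := by
    linear_combination (-((u0 * s - u1 * c) * (-v2 * w₄ + v3 * w₃)
      - (v0 * s - v1 * c) * (-u2 * w₄ + u3 * w₃))) * hG
  linarith [hgram, hzero]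
end
end

section
/- Fix σ ∈ {+1,−1} and let p₁, p₂ ∈ U. Set cᵢ = ⟨X(pᵢ), LG^σ(pᵢ)⟩ for i = 1,2 and assume c₁ ≠ 0 and c₂ ≠ 0. Then the lightcone pedal surface satisfies LP^σ(p₁) = LP^σ(p₂) if and only if the tangent lightlike hyperplanes coincide as subsets of ℝ⁴₂: LHP(LG^σ(p₁), c₁) = LHP(LG^σ(p₂), c₂). -/
noncomputable section

/-- The lightcone pedal surface `LP^σ(p) = ⟨X(p), LG^σ(p)⟩ • LG^σ(p)`. -/
def LP (X e1 e2 : ℝ × ℝ → Fin 4 → ℝ) (σ : ℝ) (p : ℝ × ℝ) : Fin 4 → ℝ :=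
  pprod (X p) (LG e1 e2 σ p) • LG e1 e2 σ p

lemma pprod_add_left' (x y z : Fin 4 → ℝ) : pprod (x + y) z = pprod x z + pprod y z := by
  simp [pprod, Pi.add_apply]; ring

lemma pprod_sub_left' (x y z : Fin 4 → ℝ) : pprod (x - y) z = pprod x z - pprod y z := by
  simp [pprod, Pi.sub_apply]; ring

lemma pprod_smul_left' (c : ℝ) (x z : Fin 4 → ℝ) : pprod (c • x) z = c * pprod x z := by
  simp [pprod, Pi.smul_apply, smul_eq_mul]; ring

lemma pprod_smul_right' (c : ℝ) (x z : Fin 4 → ℝ) : pprod x (c • z) = c * pprod x z := by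
  simp [pprod, Pi.smul_apply, smul_eq_mul]; ring

lemma lg_apply (e1 e2 : ℝ × ℝ → Fin 4 → ℝ) (σ : ℝ) (p : ℝ × ℝ) (i : Fin 4) :
    LG e1 e2 σ p i = (xi e1 e2 σ p)⁻¹ * (e1 p i + σ * e2 p i) := by
  simp [LG, Pi.smul_apply, Pi.add_apply, smul_eq_mul]

lemma lg_norm (e1 e2 : ℝ × ℝ → Fin 4 → ℝ) (σ : ℝ) (hσ2 : σ ^ 2 = 1) (p : ℝ × ℝ)
    (h1 : pprod (e1 p) (e1 p) = -1) (h2 : pprod (e2 p) (e2 p) = 1)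
    (h3 : pprod (e1 p) (e2 p) = 0) :
    (LG e1 e2 σ p 0) ^ 2 + (LG e1 e2 σ p 1) ^ 2 = 1 := by
  simp only [pprod] at h1 h2 h3
  obtain ⟨a, ha⟩ : ∃ x, x = e1 p 0 + σ * e2 p 0 := ⟨_, rfl⟩
  obtain ⟨b, hb⟩ : ∃ x, x = e1 p 1 + σ * e2 p 1 := ⟨_, rfl⟩
  obtain ⟨c, hc⟩ : ∃ x, x = e1 p 2 + σ * e2 p 2 := ⟨_, rfl⟩
  obtain ⟨d, hd⟩ : ∃ x, x = e1 p 3 + σ * e2 p 3 := ⟨_, rfl⟩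
  have key : -(a ^ 2) - b ^ 2 + c ^ 2 + d ^ 2 = 0 := by
    rw [ha, hb, hc, hd]; linear_combination h1 + 2 * σ * h3 + σ ^ 2 * h2 + hσ2
  have hv : -(a * e1 p 0) - b * e1 p 1 + c * e1 p 2 + d * e1 p 3 = -1 := by
    rw [ha, hb, hc, hd]; linear_combination h1 + σ * h3
  clear h1 h2 h3
  have hS : a ^ 2 + b ^ 2 > 0 := by
    rcases lt_or_eq_of_le (by positivity : (0 : ℝ) ≤ a ^ 2 + b ^ 2) with h | h
    · exact h
    · exfalso
      have ha0 : a = 0 := by nlinarith [sq_nonneg a, sq_nonneg b]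
      have hb0 : b = 0 := by nlinarith [sq_nonneg a, sq_nonneg b]
      have hc0 : c = 0 := by nlinarith [sq_nonneg c, sq_nonneg d]
      have hd0 : d = 0 := by nlinarith [sq_nonneg c, sq_nonneg d]
      rw [ha0, hb0, hc0, hd0] at hv; norm_num at hv
  have hxi : xi e1 e2 σ p = Real.sqrt (a ^ 2 + b ^ 2) := by rw [xi, ha, hb]
  have hxipos : 0 < xi e1 e2 σ p := by rw [hxi]; exact Real.sqrt_pos.mpr hS
  have hxisq : (xi e1 e2 σ p) ^ 2 = a ^ 2 + b ^ 2 := by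
    rw [hxi]; exact Real.sq_sqrt hS.le
  rw [lg_apply, lg_apply, ← ha, ← hb]
  have hxine : xi e1 e2 σ p ≠ 0 := hxipos.ne'
  calc ((xi e1 e2 σ p)⁻¹ * a) ^ 2 + ((xi e1 e2 σ p)⁻¹ * b) ^ 2
      = ((xi e1 e2 σ p) ^ 2)⁻¹ * (a ^ 2 + b ^ 2) := by rw [← inv_pow]; ring
    _ = (a ^ 2 + b ^ 2)⁻¹ * (a ^ 2 + b ^ 2) := by rw [hxisq]
    _ = 1 := inv_mul_cancel₀ hS.ne'

theorem stmt15 (U : Set (ℝ × ℝ)) (X e1 e2 : ℝ × ℝ → Fin 4 → ℝ)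
    (hsurf : IsLorentzSurface U X) (hframe : IsNormalFrame U X e1 e2)
    (σ : ℝ) (hσ : σ = 1 ∨ σ = -1)
    (p₁ p₂ : ℝ × ℝ) (hp₁ : p₁ ∈ U) (hp₂ : p₂ ∈ U)
    (hc₁ : pprod (X p₁) (LG e1 e2 σ p₁) ≠ 0)
    (hc₂ : pprod (X p₂) (LG e1 e2 σ p₂) ≠ 0) :
    LP X e1 e2 σ p₁ = LP X e1 e2 σ p₂ ↔
      {x : Fin 4 → ℝ | pprod x (LG e1 e2 σ p₁) = pprod (X p₁) (LG e1 e2 σ p₁)} =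
        {x : Fin 4 → ℝ | pprod x (LG e1 e2 σ p₂) = pprod (X p₂) (LG e1 e2 σ p₂)} := by
  obtain ⟨-, -, hfr⟩ := hframe
  have hσ2 : σ ^ 2 = 1 := by rcases hσ with rfl | rfl <;> norm_num
  obtain ⟨h11, h12, h13, -⟩ := hfr p₁ hp₁
  obtain ⟨h21, h22, h23, -⟩ := hfr p₂ hp₂
  set g₁ := LG e1 e2 σ p₁ with hg₁
  set g₂ := LG e1 e2 σ p₂ with hg₂
  set c₁ := pprod (X p₁) g₁ with hcc₁
  set c₂ := pprod (X p₂) g₂ with hcc₂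
  have n1 : (g₁ 0) ^ 2 + (g₁ 1) ^ 2 = 1 := lg_norm e1 e2 σ hσ2 p₁ h11 h12 h13
  have n2 : (g₂ 0) ^ 2 + (g₂ 1) ^ 2 = 1 := lg_norm e1 e2 σ hσ2 p₂ h21 h22 h23
  have hLP1 : LP X e1 e2 σ p₁ = c₁ • g₁ := rfl
  have hLP2 : LP X e1 e2 σ p₂ = c₂ • g₂ := rfl
  constructor
  · intro h
    rw [hLP1, hLP2] at h
    have hcomp : ∀ i, c₁ * g₁ i = c₂ * g₂ i := fun i => by
      have := congrFun h i
      simpa [Pi.smul_apply, smul_eq_mul] using this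
    have hcc : c₁ ^ 2 = c₂ ^ 2 := by
      have key : c₁ ^ 2 * ((g₁ 0) ^ 2 + (g₁ 1) ^ 2) = c₂ ^ 2 * ((g₂ 0) ^ 2 + (g₂ 1) ^ 2) := by
        linear_combination (c₁ * g₁ 0 + c₂ * g₂ 0) * hcomp 0 + (c₁ * g₁ 1 + c₂ * g₂ 1) * hcomp 1
      rw [n1, n2, mul_one, mul_one] at key; exact key
    have hpr : ∀ x, c₁ * pprod x g₁ = c₂ * pprod x g₂ := fun x => by
      rw [← pprod_smul_right', ← pprod_smul_right', h]
    ext x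
    simp only [Set.mem_setOf_eq]
    constructor
    · intro hx
      have := hpr x
      rw [hx] at this
      have h2' : c₂ * pprod x g₂ = c₂ * c₂ := by nlinarith [hcc]
      exact mul_left_cancel₀ hc₂ h2'
    · intro hx
      have := hpr x
      rw [hx] at this
      have h1' : c₁ * pprod x g₁ = c₁ * c₁ := by nlinarith [hcc]
      exact mul_left_cancel₀ hc₁ h1'
  · intro h
    have hmem : ∀ x : Fin 4 → ℝ, pprod x g₁ = c₁ ↔ pprod x g₂ = c₂ := fun x =>
      Set.ext_iff.mp h x
    have hker : ∀ w, pprod w g₁ = 0 → pprod w g₂ = 0 := by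
      intro w hw
      have h1' : pprod (X p₁ + w) g₁ = c₁ := by rw [pprod_add_left', hw, ← hcc₁]; ring
      have h2' := (hmem _).mp h1'
      have h3' : pprod (X p₁) g₂ = c₂ := (hmem _).mp rfl
      rw [pprod_add_left', h3'] at h2'
      linarith
    set u : Fin 4 → ℝ := ![-(g₁ 0), -(g₁ 1), g₁ 2, g₁ 3] with hu
    have hu1 : pprod u g₁ = (g₁ 0) ^ 2 + (g₁ 1) ^ 2 + (g₁ 2) ^ 2 + (g₁ 3) ^ 2 := by
      simp [pprod, hu]; ring
    have hua : 0 < pprod u g₁ := by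
      rw [hu1]; nlinarith [sq_nonneg (g₁ 2), sq_nonneg (g₁ 3)]
    set a := pprod u g₁ with haa
    set lam := pprod u g₂ / a with hlam
    have key : ∀ s : Fin 4 → ℝ, a * pprod s g₂ = pprod s g₁ * pprod u g₂ := by
      intro s
      have hw : pprod (a • s - (pprod s g₁) • u) g₁ = 0 := by
        rw [pprod_sub_left', pprod_smul_left', pprod_smul_left', ← haa]; ring
      have := hker _ hw
      rw [pprod_sub_left', pprod_smul_left', pprod_smul_left'] at this
      linarith
    have hsingle : ∀ (i : Fin 4) (g : Fin 4 → ℝ),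
        pprod (Pi.single i 1) g = (![-1, -1, 1, 1] : Fin 4 → ℝ) i * g i := by
      intro i g
      fin_cases i <;> simp [pprod, Pi.single_apply]
    have hcancel : ∀ i, a * g₂ i = g₁ i * pprod u g₂ := by
      intro i
      have hk := key (Pi.single i 1)
      rw [hsingle i g₁, hsingle i g₂] at hk
      have heps : (![-1, -1, 1, 1] : Fin 4 → ℝ) i ≠ 0 := by
        fin_cases i <;> norm_num
      apply mul_left_cancel₀ heps
      linear_combination hk
    have hcomp : ∀ i, g₂ i = lam * g₁ i := by
      intro i
      rw [hlam, div_mul_eq_mul_div, eq_div_iff hua.ne']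
      linarith [hcancel i]
    have hgg : g₂ = lam • g₁ := funext fun i => by
      rw [hcomp i]; simp [Pi.smul_apply, smul_eq_mul]
    have hc2 : c₂ = lam * c₁ := by
      have hx : pprod (X p₁) g₂ = c₂ := (hmem _).mp rfl
      rw [hgg, pprod_smul_right'] at hx
      rw [← hx, hcc₁]
    have hlam2 : lam ^ 2 = 1 := by
      have e0 := hcomp 0
      have e1' := hcomp 1
      have : lam ^ 2 * ((g₁ 0) ^ 2 + (g₁ 1) ^ 2) = 1 := by
        rw [← n2, e0, e1']; ring
      rw [n1, mul_one] at this; exact this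
    rw [hLP1, hLP2, hgg, hc2]
    funext i
    simp only [Pi.smul_apply, smul_eq_mul]
    linear_combination (-(c₁ * g₁ i)) * hlam2
end
end
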